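/- For nonnegative integers n, k with n ≥ k, the degenerate central factorial polynomials of the second kind satisfy T_{2,λ}(n,k|x) = Σ_{l=k}^n C(n,l)·T_{2,λ}(l,k)·(x)_{n-l,λ}, where (x)_{m,λ} = x(x-λ)(x-2λ)⋯(x-(m-1)λ) is the λ-falling factorial. -/

import Mathlib

noncomputable def T2 (lam x : ℝ) (n k : ℕ) : ℝ :=
  iteratedDeriv n (fun t : ℝ =>
    (k.factorial : ℝ)⁻¹ * (1 + lam * t) ^ (x / lam) *
      ((1 + lam * t) ^ (1 / (2 * lam)) - (1 + lam * t) ^ (-(1 / (2 * lam)))) ^ k) 0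

noncomputable def dfall (lam x : ℝ) (n : ℕ) : ℝ := ∏ i ∈ Finset.range n, (x - i * lam)

/-!
The generating function factors as `((1 + λt)^{1/(2λ)} - (1 + λt)^{-1/(2λ)})^k / k!` times
`(1 + λt)^{x/λ}`. By the Leibniz rule, the `n`-th derivative at `0` is
`∑ C(n,l) · a_l · b_{n-l}`, where `a_l` is the `l`-th derivative of the first factor, i.e.
`T_{2,λ}(l,k)` (the case `x = 0`), and `b_m` that of the second one, i.e. `(x)_{m,λ}`.
Since the first factor is a `k`-th power of a function vanishing at `0`, `a_l = 0` for `l < k`.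
-/

theorem iteratedDeriv_fun_pow_eq_zero_of_lt {𝕜 𝔸 : Type*} [NontriviallyNormedField 𝕜]
    [NormedRing 𝔸] [NormedAlgebra 𝕜 𝔸] {f : 𝕜 → 𝔸} {x : 𝕜} {l k : ℕ}
    (hf : ContDiffAt 𝕜 l f x) (hfx : f x = 0) (hlk : l < k) :
    iteratedDeriv l (fun t => f t ^ k) x = 0 := by
  induction k generalizing l with
  | zero => omega
  | succ k ih =>
    simp_rw [pow_succ']
    rw [iteratedDeriv_fun_mul hf (hf.pow k)]
    refine Finset.sum_eq_zero fun i hi => ?_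
    rcases Nat.eq_zero_or_pos i with rfl | hi0
    · simp [hfx]
    · have := Finset.mem_range.mp hi
      rw [ih (hf.of_le (by norm_cast; omega)) (by omega), mul_zero]

theorem dfall_succ (lam z : ℝ) (m : ℕ) : dfall lam z (m + 1) = z * dfall lam (z - lam) m := by
  simp only [dfall, Finset.prod_range_succ', Nat.cast_zero, zero_mul, sub_zero, Nat.cast_succ]
  rw [mul_comm]
  congr 1
  exact Finset.prod_congr rfl fun i _ => by ring

theorem hasDerivAt_one_add_mul_rpow (lam c t : ℝ) (ht : 1 + lam * t ≠ 0) :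
    HasDerivAt (fun t => (1 + lam * t) ^ c) (lam * c * (1 + lam * t) ^ (c - 1)) t := by
  simpa using (((hasDerivAt_id t).const_mul lam).const_add 1).rpow_const (p := c) (.inl ht)

theorem contDiffAt_one_add_mul_rpow {lam t : ℝ} (c : ℝ) {n : WithTop ℕ∞}
    (ht : 1 + lam * t ≠ 0) : ContDiffAt ℝ n (fun t => (1 + lam * t) ^ c) t :=
  ContDiffAt.rpow_const_of_ne (by fun_prop) ht

theorem eqOn_iteratedDeriv_one_add_mul_rpow {lam : ℝ} (hlam : lam ≠ 0) (z : ℝ) (m : ℕ) :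
    Set.EqOn (iteratedDeriv m fun t => (1 + lam * t) ^ (z / lam))
      (fun t => dfall lam z m * (1 + lam * t) ^ (z / lam - m)) {t | 1 + lam * t ≠ 0} := by
  have hopen : IsOpen {t : ℝ | 1 + lam * t ≠ 0} := isOpen_ne_fun (by fun_prop) (by fun_prop)
  induction m generalizing z with
  | zero => intro t _; simp [dfall]
  | succ m ih =>
    have hderiv : Set.EqOn (deriv fun t => (1 + lam * t) ^ (z / lam))
        (fun t => z * (1 + lam * t) ^ ((z - lam) / lam)) {t | 1 + lam * t ≠ 0} := by
      intro t ht
      rw [(hasDerivAt_one_add_mul_rpow lam _ t ht).deriv]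
      field_simp
    intro t ht
    rw [iteratedDeriv_succ', hderiv.iteratedDeriv_of_isOpen hopen m ht,
      iteratedDeriv_const_mul_field, ih _ ht, dfall_succ, sub_div, div_self hlam]
    push_cast
    ring_nf

theorem iteratedDeriv_one_add_mul_rpow_zero {lam : ℝ} (hlam : lam ≠ 0) (z : ℝ) (m : ℕ) :
    iteratedDeriv m (fun t => (1 + lam * t) ^ (z / lam)) 0 = dfall lam z m := by
  simpa using eqOn_iteratedDeriv_one_add_mul_rpow hlam z m (show 1 + lam * 0 ≠ 0 by simp)

theorem T2_zero_eq (lam : ℝ) (l k : ℕ) :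
    T2 lam 0 l k = iteratedDeriv l (fun t => (k.factorial : ℝ)⁻¹ *
      ((1 + lam * t) ^ (1 / (2 * lam)) - (1 + lam * t) ^ (-(1 / (2 * lam)))) ^ k) 0 := by
  simp [T2]

theorem T2_zero_of_lt (lam : ℝ) {l k : ℕ} (hlk : l < k) : T2 lam 0 l k = 0 := by
  rw [T2_zero_eq, iteratedDeriv_const_mul_field,
    iteratedDeriv_fun_pow_eq_zero_of_lt _ (by simp) hlk, mul_zero]
  exact (contDiffAt_one_add_mul_rpow _ (by simp)).sub (contDiffAt_one_add_mul_rpow _ (by simp))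

theorem T2_eq_sum_range {lam : ℝ} (hlam : lam ≠ 0) (x : ℝ) (n k : ℕ) :
    T2 lam x n k
      = ∑ l ∈ Finset.range (n + 1), (n.choose l : ℝ) * T2 lam 0 l k * dfall lam x (n - l) := by
  have h0 : 1 + lam * 0 ≠ 0 := by simp
  have hψ := (contDiffAt_one_add_mul_rpow (n := n) (1 / (2 * lam)) h0).sub
    (contDiffAt_one_add_mul_rpow (-(1 / (2 * lam))) h0)
  have hT2 : T2 lam x n k = iteratedDeriv n (fun t => ((k.factorial : ℝ)⁻¹ *
      ((1 + lam * t) ^ (1 / (2 * lam)) - (1 + lam * t) ^ (-(1 / (2 * lam)))) ^ k) *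
      (1 + lam * t) ^ (x / lam)) 0 := by
    rw [T2]
    congr 1
    funext t
    ring
  rw [hT2, iteratedDeriv_fun_mul (contDiffAt_const.mul (hψ.pow k))
    (contDiffAt_one_add_mul_rpow (x / lam) h0)]
  simp only [T2_zero_eq, iteratedDeriv_one_add_mul_rpow_zero hlam]

theorem T2_poly_expansion_general (lam x : ℝ) (hlam : lam ≠ 0) (n k : ℕ) :
    T2 lam x n k
      = ∑ l ∈ Finset.Icc k n, (n.choose l : ℝ) * T2 lam 0 l k * dfall lam x (n - l) := by
  rw [T2_eq_sum_range hlam]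
  refine (Finset.sum_subset (fun l hl => ?_) fun l hl hlk => ?_).symm
  · simp only [Finset.mem_Icc, Finset.mem_range] at hl ⊢
    omega
  · simp only [Finset.mem_Icc, Finset.mem_range] at hl hlk
    rw [T2_zero_of_lt lam (by omega), mul_zero, zero_mul]

theorem T2_poly_expansion (lam x : ℝ) (hlam : lam ≠ 0) (n k : ℕ) (h : k ≤ n) :
    T2 lam x n k
      = ∑ l ∈ Finset.Icc k n, (n.choose l : ℝ) * T2 lam 0 l k * dfall lam x (n - l) :=
  T2_poly_expansion_general lam x hlam n k
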